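/- Let d ≥ 2 be an integer. There exists a universal constant C > 0 such that for all β ≥ 10 and all τ ∈ {0, 1/4, 1/2}, ∫_{[−1,1]^d} exp(−β·∏_{k=1}^d (1−y_k²)^{1/2}) / ∏_{k=1}^d (1−y_k²)^τ dϱ(y) ≤ C·β^{2τ−2}·(log β)^{d−1}, where ϱ is the uniform probability measure on [−1,1]^d. -/

import Mathlib

/-!
Split off the first coordinate. With the others fixed and `P = ∏_{k ≥ 2} √(1 - y_k²)`, fold
`[-1, 1]` onto `[0, 1]` and substitute `1 - y² ≥ v²`: the one-dimensional integral is at most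
`2 ∫₀^∞ e^{-βPv} v^{1-2τ} dv = 2 Γ(2 - 2τ) (βP)^{2τ-2} ≤ 2 (βP)^{2τ-2}`, and it is also at most `2`,
hence at most `2 (βP)^{2τ-2+2ε}` for `0 ≤ ε ≤ 1 - τ`. Each remaining coordinate then contributes
`∫ (1 - y²)^{ε-1} dϱ ≤ 1/ε`, so the integral is at most `2 β^{2τ-2} e^{2ε log β} ε^{-(d-1)}`, and
`ε = min ((d - 1) / (2 log β), 1/2)` bounds the last two factors by `e⁶ (log β)^{d-1}`.
-/

open MeasureTheory Real

noncomputable section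

/-- The uniform probability measure on `[-1,1]`. -/
def unif : Measure ℝ := (2 : ENNReal)⁻¹ • volume.restrict (Set.Icc (-1 : ℝ) 1)

instance : IsProbabilityMeasure unif := by
  constructor
  simp only [unif, Measure.smul_apply, Measure.restrict_apply MeasurableSet.univ,
    Set.univ_inter, Real.volume_Icc, smul_eq_mul]
  rw [show (1 : ℝ) - (-1) = 2 by norm_num]
  rw [ENNReal.ofReal_ofNat]
  exact ENNReal.inv_mul_cancel (by norm_num) (by norm_num)

/-- The uniform probability measure on `[-1,1]^d`. -/
def unifd (d : ℕ) : Measure (Fin d → ℝ) := Measure.pi fun _ => unif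

/-- The multivariate envelope bound `Ω(y) = 2^d / (π^{d/2} ∏_k (1-y_k²)^{1/4})`. -/
def envM (d : ℕ) (y : Fin d → ℝ) : ℝ :=
  2 ^ d / (π ^ ((d : ℝ) / 2) * ∏ k, (1 - y k ^ 2) ^ ((1 : ℝ) / 4))

/-- `H_d(β) = β (log(1/β))^{d-1}`. -/
def Hd (d : ℕ) (β : ℝ) : ℝ := β * Real.log (1 / β) ^ (d - 1)

open Set
open scoped ENNReal

lemma Gamma_le_one_of_mem_Icc {s : ℝ} (hs : s ∈ Icc 1 2) : Gamma s ≤ 1 := by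
  have := convexOn_Gamma.le_on_segment (x := 1) (y := 2) (by norm_num) (by norm_num)
    (by rwa [segment_eq_Icc one_le_two])
  simpa [Gamma_one, Gamma_two] using this

lemma integral_le_toReal_lintegral_ofReal {α : Type*} [MeasurableSpace α] {μ : Measure α}
    (f : α → ℝ) : ∫ x, f x ∂μ ≤ (∫⁻ x, ENNReal.ofReal (f x) ∂μ).toReal := by
  by_cases hf : Integrable f μ
  · rw [integral_eq_lintegral_pos_part_sub_lintegral_neg_part hf]
    linarith [ENNReal.toReal_nonneg (a := ∫⁻ x, ENNReal.ofReal (-f x) ∂μ)]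
  · rw [integral_undef hf]
    exact ENNReal.toReal_nonneg

section Pi

variable {α : Type*} [MeasurableSpace α] (μ : Measure α) [SigmaFinite μ]

lemma lintegral_pi_fin_succ {n : ℕ} {F : (Fin (n + 1) → α) → ℝ≥0∞} (hF : Measurable F) :
    ∫⁻ y, F y ∂Measure.pi (fun _ => μ)
      = ∫⁻ z, ∫⁻ a, F (Fin.cons a z) ∂μ ∂Measure.pi (fun _ => μ) := by
  rw [← ((measurePreserving_piFinSuccAbove (fun _ => μ) 0).symm _).lintegral_comp_emb
      (MeasurableEquiv.measurableEmbedding _),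
    lintegral_prod_symm (fun p => F ((MeasurableEquiv.piFinSuccAbove _ 0).symm p))
      (hF.comp (MeasurableEquiv.measurable _)).aemeasurable]
  simp [MeasurableEquiv.piFinSuccAbove_symm_apply, Fin.insertNthEquiv_zero, Fin.consEquiv]

lemma lintegral_pi_prod_eq_pow {g : α → ℝ≥0∞} (hg : Measurable g) (n : ℕ) :
    ∫⁻ z, ∏ j, g (z j) ∂Measure.pi (fun _ : Fin n => μ) = (∫⁻ x, g x ∂μ) ^ n := by
  induction n with
  | zero => simp
  | succ n ih =>
    rw [lintegral_pi_fin_succ μ (by fun_prop)]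
    simp_rw [Fin.prod_univ_succ, Fin.cons_zero, Fin.cons_succ, lintegral_mul_const _ hg]
    rw [lintegral_const_mul _ (by fun_prop), ih, pow_succ, mul_comm]

end Pi

lemma ae_unif_mem_Ioo : ∀ᵐ y ∂unif, y ∈ Ioo (-1 : ℝ) 1 := by
  rw [unif, ← Measure.restrict_congr_set Ioo_ae_eq_Icc]
  exact Measure.ae_smul_measure (ae_restrict_mem measurableSet_Ioo) _

lemma lintegral_unif_comp_one_sub_sq_le {F : ℝ → ℝ≥0∞} (hF : AntitoneOn F (Ioi 0)) :
    ∫⁻ y, F (1 - y ^ 2) ∂unif ≤ ∫⁻ v in Ioc 0 1, ENNReal.ofReal (2 * v) * F (v ^ 2) := by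
  -- each half of `[-1, 1]` is `y = ± (1 - v ^ 2)`, `v ∈ [0, 1]`, and then `1 - y ^ 2 ≥ v ^ 2`
  have half : ∀ σ : ℝ, |σ| = 1 → ∫⁻ y in (fun v => σ * (1 - v ^ 2)) '' Icc 0 1, F (1 - y ^ 2)
      ≤ ∫⁻ v in Ioc 0 1, ENNReal.ofReal (2 * v) * F (v ^ 2) := by
    intro σ hσ
    have hσ2 : σ ^ 2 = 1 := by rw [← sq_abs, hσ, one_pow]
    rw [lintegral_image_eq_lintegral_abs_deriv_mul measurableSet_Icc
      (f' := fun v => σ * -(2 * v))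
      (fun v _ => by simpa using ((hasDerivAt_pow 2 v).const_sub 1).const_mul σ |>.hasDerivWithinAt)
      (fun a ha b hb hab => by
        have : a ^ 2 = b ^ 2 := by
          have := mul_left_cancel₀ (by rintro rfl; simp at hσ) hab
          linarith
        exact (pow_left_inj₀ ha.1 hb.1 two_ne_zero).mp this),
      setLIntegral_congr Ioc_ae_eq_Icc.symm]
    refine setLIntegral_mono' measurableSet_Ioc fun v hv => ?_
    rw [abs_mul, hσ, one_mul, abs_neg, abs_of_nonneg (by linarith [hv.1]), mul_pow, hσ2, one_mul]
    gcongr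
    refine hF (pow_pos hv.1 2) (pow_pos hv.1 2 |>.trans_le ?_) ?_ <;>
      nlinarith [mul_nonneg (pow_pos hv.1 2).le
        (sub_nonneg.2 (pow_le_one₀ (n := 2) hv.1.le hv.2))]
  have cover : Icc (-1 : ℝ) 1 ⊆ (fun v => -1 * (1 - v ^ 2)) '' Icc 0 1 ∪
      (fun v => 1 * (1 - v ^ 2)) '' Icc 0 1 := by
    intro y hy
    rcases le_total y 0 with h | h
    · refine Or.inl ⟨√(1 + y), ⟨sqrt_nonneg _, sqrt_le_one.mpr (by linarith)⟩, ?_⟩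
      dsimp only; rw [sq_sqrt (by linarith [hy.1])]; ring
    · refine Or.inr ⟨√(1 - y), ⟨sqrt_nonneg _, sqrt_le_one.mpr (by linarith)⟩, ?_⟩
      dsimp only; rw [sq_sqrt (by linarith [hy.2])]; ring
  calc ∫⁻ y, F (1 - y ^ 2) ∂unif
      = 2⁻¹ * ∫⁻ y in Icc (-1) 1, F (1 - y ^ 2) := by
        rw [unif, lintegral_smul_measure, smul_eq_mul]
    _ ≤ 2⁻¹ * ((∫⁻ y in (fun v => -1 * (1 - v ^ 2)) '' Icc 0 1, F (1 - y ^ 2))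
          + ∫⁻ y in (fun v => 1 * (1 - v ^ 2)) '' Icc 0 1, F (1 - y ^ 2)) := by
        gcongr
        exact (lintegral_mono_set cover).trans (lintegral_union_le _ _ _)
    _ ≤ 2⁻¹ * ((∫⁻ v in Ioc 0 1, ENNReal.ofReal (2 * v) * F (v ^ 2))
          + ∫⁻ v in Ioc 0 1, ENNReal.ofReal (2 * v) * F (v ^ 2)) := by
        gcongr 2⁻¹ * (?_ + ?_)
        exacts [half (-1) (by norm_num), half 1 (by norm_num)]
    _ = _ := by
        rw [← two_mul, ← mul_assoc, ENNReal.inv_mul_cancel two_ne_zero ENNReal.ofNat_ne_top,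
          one_mul]

lemma lintegral_unif_one_sub_sq_rpow_le {ε : ℝ} (hε : 0 < ε) (hε1 : ε ≤ 1) :
    ∫⁻ y, ENNReal.ofReal ((1 - y ^ 2) ^ (ε - 1)) ∂unif ≤ ENNReal.ofReal ε⁻¹ := by
  refine (lintegral_unif_comp_one_sub_sq_le (F := fun u => ENNReal.ofReal (u ^ (ε - 1)))
    fun a ha c _ hac => ENNReal.ofReal_le_ofReal
      (rpow_le_rpow_of_nonpos ha hac (by linarith))).trans_eq ?_
  have hint : IntegrableOn (fun v : ℝ => 2 * v ^ (2 * ε - 1)) (Ioc 0 1) :=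
    ((intervalIntegral.intervalIntegrable_rpow' (by linarith)).const_mul 2).1
  rw [setLIntegral_congr_fun measurableSet_Ioc
      (g := fun v => ENNReal.ofReal (2 * v ^ (2 * ε - 1))) fun v hv => by
        dsimp only
        rw [← ENNReal.ofReal_mul (by linarith [hv.1]), ← rpow_natCast_mul hv.1.le,
          show 2 * ε - 1 = (2 : ℕ) * (ε - 1) + 1 by push_cast; ring, rpow_add_one hv.1.ne']
        ring_nf,
    ← ofReal_integral_eq_lintegral_ofReal hint
      (ae_restrict_of_forall_mem measurableSet_Ioc fun v hv =>
        mul_nonneg zero_le_two (rpow_nonneg hv.1.le _)),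
    ← intervalIntegral.integral_of_le zero_le_one, intervalIntegral.integral_const_mul,
    integral_rpow (Or.inl (by linarith))]
  congr 1
  rw [show 2 * ε - 1 + 1 = 2 * ε by ring, Real.one_rpow, Real.zero_rpow (by positivity), sub_zero]
  field_simp

lemma lintegral_unif_exp_div_rpow_le {b τ : ℝ} (hb : 0 < b) (hτ0 : 0 ≤ τ) (hτ : τ ≤ 1 / 2) :
    ∫⁻ y, ENNReal.ofReal (exp (-b * (1 - y ^ 2) ^ (1 / 2 : ℝ)) / (1 - y ^ 2) ^ τ) ∂unif
      ≤ ENNReal.ofReal (2 * b ^ (2 * τ - 2)) := by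
  have hanti : AntitoneOn (fun u : ℝ => ENNReal.ofReal (exp (-b * u ^ (1 / 2 : ℝ)) / u ^ τ))
      (Ioi 0) := fun u hu w _ huw => by
    have := rpow_le_rpow (le_of_lt hu) huw (by norm_num : (0 : ℝ) ≤ 1 / 2)
    exact ENNReal.ofReal_le_ofReal (div_le_div₀ (exp_pos _).le (exp_le_exp.2 (by nlinarith))
      (rpow_pos_of_pos hu τ) (rpow_le_rpow (le_of_lt hu) huw hτ0))
  have hint :
      IntegrableOn (fun v : ℝ => 2 * (v ^ (1 - 2 * τ) * exp (-b * v ^ (1 : ℝ)))) (Ioi 0) :=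
    (integrableOn_rpow_mul_exp_neg_mul_rpow (by linarith) one_pos hb).const_mul 2
  calc _ ≤ ∫⁻ v in Ioc 0 1, ENNReal.ofReal (2 * v) *
          ENNReal.ofReal (exp (-b * (v ^ 2) ^ (1 / 2 : ℝ)) / (v ^ 2) ^ τ) :=
        lintegral_unif_comp_one_sub_sq_le hanti
    _ = ∫⁻ v in Ioc 0 1, ENNReal.ofReal (2 * (v ^ (1 - 2 * τ) * exp (-b * v ^ (1 : ℝ)))) :=
        setLIntegral_congr_fun measurableSet_Ioc fun v hv => by
          rw [← ENNReal.ofReal_mul (by linarith [hv.1]), ← rpow_natCast_mul hv.1.le,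
            ← rpow_natCast_mul hv.1.le, show ((2 : ℕ) : ℝ) * (1 / 2) = 1 by norm_num,
            rpow_sub hv.1, rpow_one]
          push_cast
          ring_nf
    _ ≤ ∫⁻ v in Ioi 0, ENNReal.ofReal (2 * (v ^ (1 - 2 * τ) * exp (-b * v ^ (1 : ℝ)))) :=
        lintegral_mono_set Ioc_subset_Ioi_self
    _ = ENNReal.ofReal
          (2 * (b ^ (-(1 - 2 * τ + 1) / 1) * (1 / 1) * Gamma ((1 - 2 * τ + 1) / 1))) := by
        rw [← ofReal_integral_eq_lintegral_ofReal hint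
          (ae_restrict_of_forall_mem measurableSet_Ioi fun v hv =>
            mul_nonneg zero_le_two (mul_nonneg (rpow_nonneg (le_of_lt hv) _) (exp_pos _).le)),
          integral_const_mul, integral_rpow_mul_exp_neg_mul_rpow one_pos (by linarith) hb]
    _ ≤ ENNReal.ofReal (2 * b ^ (2 * τ - 2)) := by
        refine ENNReal.ofReal_le_ofReal ?_
        have hΓ := Gamma_le_one_of_mem_Icc (s := 2 - 2 * τ) ⟨by linarith, by linarith⟩
        rw [show -(1 - 2 * τ + 1) / 1 = 2 * τ - 2 by ring,
          show (1 - 2 * τ + 1) / 1 = 2 - 2 * τ by ring]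
        have := rpow_pos_of_pos hb (2 * τ - 2)
        nlinarith

lemma lintegral_unif_exp_div_rpow_le_rpow {b τ ε : ℝ} (hb : 0 < b) (hτ0 : 0 ≤ τ) (hτ : τ ≤ 1 / 2)
    (hε0 : 0 ≤ ε) (hε : ε ≤ 1 - τ) :
    ∫⁻ y, ENNReal.ofReal (exp (-b * (1 - y ^ 2) ^ (1 / 2 : ℝ)) / (1 - y ^ 2) ^ τ) ∂unif
      ≤ ENNReal.ofReal (2 * b ^ (2 * τ - 2 + 2 * ε)) := by
  rcases le_total 1 b with hb1 | hb1
  · refine (lintegral_unif_exp_div_rpow_le hb hτ0 hτ).trans (ENNReal.ofReal_le_ofReal ?_)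
    gcongr
    linarith
  · calc _ ≤ ∫⁻ y, ENNReal.ofReal ((1 - y ^ 2) ^ ((1 - τ) - 1)) ∂unif := by
          refine lintegral_mono_ae (ae_unif_mem_Ioo.mono fun y hy => ENNReal.ofReal_le_ofReal ?_)
          have hx : 0 < 1 - y ^ 2 := by nlinarith [hy.1, hy.2]
          rw [show 1 - τ - 1 = -τ by ring, rpow_neg hx.le, ← one_div]
          gcongr
          exact exp_le_one_iff.2 (by nlinarith [rpow_nonneg hx.le (1 / 2 : ℝ)])
      _ ≤ ENNReal.ofReal (1 - τ)⁻¹ :=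
          lintegral_unif_one_sub_sq_rpow_le (by linarith) (by linarith)
      _ ≤ ENNReal.ofReal (2 * b ^ (2 * τ - 2 + 2 * ε)) := by
          refine ENNReal.ofReal_le_ofReal ?_
          have := one_le_rpow_of_pos_of_le_one_of_nonpos hb hb1
            (by linarith : 2 * τ - 2 + 2 * ε ≤ 0)
          rw [inv_le_iff_one_le_mul₀ (by linarith)]
          nlinarith

lemma lintegral_unif_cons_le {n : ℕ} {β τ ε : ℝ} (hβ : 0 < β) (hτ0 : 0 ≤ τ) (hτ : τ ≤ 1 / 2)
    (hε0 : 0 ≤ ε) (hε : ε ≤ 1 - τ) {z : Fin n → ℝ} (hz : ∀ j, z j ∈ Ioo (-1 : ℝ) 1) :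
    ∫⁻ a, ENNReal.ofReal (exp (-β * ∏ k, (1 - (Fin.cons a z : Fin (n + 1) → ℝ) k ^ 2) ^ (1 / 2 : ℝ))
        / ∏ k, (1 - (Fin.cons a z : Fin (n + 1) → ℝ) k ^ 2) ^ τ) ∂unif
      ≤ ENNReal.ofReal (2 * β ^ (2 * τ - 2 + 2 * ε))
          * ∏ j, ENNReal.ofReal ((1 - z j ^ 2) ^ (ε - 1)) := by
  have hx : ∀ j, 0 < 1 - z j ^ 2 := fun j => by nlinarith [(hz j).1, (hz j).2]
  set P := ∏ j, (1 - z j ^ 2) ^ (1 / 2 : ℝ)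
  set Q := ∏ j, (1 - z j ^ 2) ^ τ
  have hP : 0 < P := Finset.prod_pos fun j _ => rpow_pos_of_pos (hx j) _
  have hQ : 0 < Q := Finset.prod_pos fun j _ => rpow_pos_of_pos (hx j) _
  have hsplit : ∀ a : ℝ,
      exp (-β * ∏ k, (1 - (Fin.cons a z : Fin (n + 1) → ℝ) k ^ 2) ^ (1 / 2 : ℝ))
        / ∏ k, (1 - (Fin.cons a z : Fin (n + 1) → ℝ) k ^ 2) ^ τ
      = Q⁻¹ * (exp (-(β * P) * (1 - a ^ 2) ^ (1 / 2 : ℝ)) / (1 - a ^ 2) ^ τ) := fun a => by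
    simp only [Fin.prod_univ_succ, Fin.cons_zero, Fin.cons_succ, P, Q]
    ring_nf
  have hweights : Q⁻¹ * (2 * (β * P) ^ (2 * τ - 2 + 2 * ε))
      = 2 * β ^ (2 * τ - 2 + 2 * ε) * ∏ j, (1 - z j ^ 2) ^ (ε - 1) := by
    rw [mul_rpow hβ.le hP.le, ← Real.finsetProd_rpow _ _ fun j _ => (rpow_pos_of_pos (hx j) _).le,
      ← Finset.prod_inv_distrib,
      show ∀ A B C : ℝ, A * (2 * (B * C)) = 2 * B * (C * A) by intros; ring,
      ← Finset.prod_mul_distrib]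
    congr 1
    refine Finset.prod_congr rfl fun j _ => ?_
    rw [← rpow_mul (hx j).le, ← rpow_neg (hx j).le, ← rpow_add (hx j)]
    ring_nf
  simp_rw [hsplit]
  rw [lintegral_congr fun a => ENNReal.ofReal_mul (inv_nonneg.2 hQ.le),
    lintegral_const_mul' _ _ ENNReal.ofReal_ne_top]
  calc _ ≤ ENNReal.ofReal Q⁻¹ * ENNReal.ofReal (2 * (β * P) ^ (2 * τ - 2 + 2 * ε)) := by
        gcongr
        exact lintegral_unif_exp_div_rpow_le_rpow (mul_pos hβ hP) hτ0 hτ hε0 hε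
    _ = _ := by
        rw [← ENNReal.ofReal_mul (inv_nonneg.2 hQ.le), hweights,
          ENNReal.ofReal_mul (by positivity),
          ENNReal.ofReal_prod_of_nonneg fun j _ => (rpow_pos_of_pos (hx j) _).le]

lemma lintegral_unifd_succ_le (n : ℕ) {β τ ε : ℝ} (hβ : 0 < β) (hτ0 : 0 ≤ τ) (hτ : τ ≤ 1 / 2)
    (hε0 : 0 < ε) (hε : ε ≤ 1 - τ) :
    ∫⁻ y, ENNReal.ofReal (exp (-β * ∏ k, (1 - y k ^ 2) ^ (1 / 2 : ℝ)) / ∏ k, (1 - y k ^ 2) ^ τ)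
        ∂unifd (n + 1)
      ≤ ENNReal.ofReal (2 * β ^ (2 * τ - 2 + 2 * ε) * ε⁻¹ ^ n) := by
  have hz : ∀ᵐ z ∂Measure.pi (fun _ : Fin n => unif), ∀ j, z j ∈ Ioo (-1 : ℝ) 1 :=
    ae_all_iff.2 fun j => Measure.tendsto_eval_ae_ae.eventually ae_unif_mem_Ioo
  rw [unifd, lintegral_pi_fin_succ _ (by fun_prop)]
  calc _ ≤ ∫⁻ z, ENNReal.ofReal (2 * β ^ (2 * τ - 2 + 2 * ε))
          * ∏ j, ENNReal.ofReal ((1 - z j ^ 2) ^ (ε - 1)) ∂Measure.pi (fun _ => unif) :=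
        lintegral_mono_ae (hz.mono fun z hz => lintegral_unif_cons_le hβ hτ0 hτ hε0.le hε hz)
    _ ≤ ENNReal.ofReal (2 * β ^ (2 * τ - 2 + 2 * ε)) * ENNReal.ofReal ε⁻¹ ^ n := by
        rw [lintegral_const_mul' _ _ ENNReal.ofReal_ne_top, lintegral_pi_prod_eq_pow unif
          (g := fun x => ENNReal.ofReal ((1 - x ^ 2) ^ (ε - 1))) (by fun_prop)]
        gcongr
        exact lintegral_unif_one_sub_sq_rpow_le hε0 (by linarith)
    _ = _ := by
        rw [← ENNReal.ofReal_pow (by positivity), ← ENNReal.ofReal_mul (by positivity)]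

lemma two_mul_exp_one_div_pow_le (n : ℕ) : (2 * exp 1 / n) ^ n ≤ exp 6 := by
  calc (2 * exp 1 / n) ^ n = (2 * exp 1) ^ n / (n : ℝ) ^ n := div_pow _ _ n
    _ ≤ (2 * exp 1) ^ n / n.factorial := by
        gcongr
        exact_mod_cast Nat.factorial_le_pow n
    _ ≤ exp (2 * exp 1) := pow_div_factorial_le_exp _ (by positivity) n
    _ ≤ exp 6 := exp_le_exp.2 (by linarith [exp_one_lt_three])

lemma exists_exp_mul_inv_pow_le {L : ℝ} (hL : 2 ≤ L) {n : ℕ} (hn : 0 < n) :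
    ∃ ε : ℝ, 0 < ε ∧ ε ≤ 1 / 2 ∧ exp (2 * ε * L) * ε⁻¹ ^ n ≤ exp 6 * L ^ n := by
  have hn' : (0 : ℝ) < n := by exact_mod_cast hn
  rcases le_or_gt (n : ℝ) L with hnL | hLn
  · refine ⟨n / (2 * L), by positivity, by rw [div_le_iff₀ (by linarith)]; linarith, ?_⟩
    calc exp (2 * (n / (2 * L)) * L) * (n / (2 * L))⁻¹ ^ n
        = (2 * exp 1 / n) ^ n * L ^ n := by
          rw [show 2 * (n / (2 * L)) * L = n * 1 by field_simp, exp_nat_mul, ← mul_pow, ← mul_pow]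
          congr 1
          field_simp
      _ ≤ exp 6 * L ^ n := by gcongr; exact two_mul_exp_one_div_pow_le n
  · refine ⟨1 / 2, by norm_num, le_rfl, ?_⟩
    rw [show 2 * (1 / 2) * L = L by ring, one_div, inv_inv]
    rcases le_or_gt (2 * exp 1) L with hL' | hL'
    · calc exp L * 2 ^ n ≤ exp (n * 1) * 2 ^ n := by gcongr; linarith
        _ = (2 * exp 1) ^ n := by rw [exp_nat_mul, mul_pow, mul_comm]
        _ ≤ 1 * L ^ n := by rw [one_mul]; gcongr
        _ ≤ exp 6 * L ^ n := by gcongr; exact one_le_exp (by norm_num)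
    · gcongr
      linarith [exp_one_lt_three]

theorem stmt_18 :
    ∃ C : ℝ, 0 < C ∧
      ∀ (d : ℕ), 2 ≤ d → ∀ β τ : ℝ, 10 ≤ β → τ ∈ ({0, 1 / 4, 1 / 2} : Set ℝ) →
        (∫ y, Real.exp (-β * ∏ k, (1 - y k ^ 2) ^ ((1 : ℝ) / 2))
            / ∏ k, (1 - y k ^ 2) ^ τ ∂(unifd d))
          ≤ C * β ^ (2 * τ - 2) * Real.log β ^ (d - 1) := by
  refine ⟨2 * exp 6, by positivity, fun d hd β τ hβ hτ => ?_⟩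
  obtain ⟨n, rfl⟩ : ∃ n, d = n + 1 := ⟨d - 1, by omega⟩
  obtain ⟨hτ0, hτ1⟩ : 0 ≤ τ ∧ τ ≤ 1 / 2 := by
    rcases hτ with rfl | rfl | rfl <;> norm_num
  have hβ0 : 0 < β := by linarith
  have hL : 2 ≤ log β := by
    rw [le_log_iff_exp_le hβ0, show (2 : ℝ) = (2 : ℕ) * 1 by norm_num, exp_nat_mul]
    nlinarith [exp_one_lt_three, exp_pos 1]
  obtain ⟨ε, hε0, hε, hopt⟩ := exists_exp_mul_inv_pow_le hL (n := n) (by omega)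
  calc _ ≤ 2 * β ^ (2 * τ - 2 + 2 * ε) * ε⁻¹ ^ n :=
        (integral_le_toReal_lintegral_ofReal _).trans <| ENNReal.toReal_le_of_le_ofReal
          (by positivity) (lintegral_unifd_succ_le n hβ0 hτ0 hτ1 hε0 (by linarith))
    _ = 2 * β ^ (2 * τ - 2) * (exp (2 * ε * log β) * ε⁻¹ ^ n) := by
        rw [rpow_add hβ0, rpow_def_of_pos hβ0 (2 * ε)]
        ring_nf
    _ ≤ 2 * β ^ (2 * τ - 2) * (exp 6 * log β ^ n) :=
        mul_le_mul_of_nonneg_left hopt (by positivity)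
    _ = _ := by rw [Nat.add_sub_cancel]; ring

end
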